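/- ReLU-CNTK Cauchy–Schwarz property: for all images y,z ∈ ℝ^{d₁×d₂×c}, all h ≥ 0 and all indices i,i' ∈ [d₁], j,j' ∈ [d₂], one has |Γ^{(h)}_{i,j,i',j'}(y,z)| ≤ √(N^{(h)}_{i,j}(y)·N^{(h)}_{i',j'}(z))/q², and Γ^{(h)}_{i,j,i,j}(y,y) = N^{(h)}_{i,j}(y)/q² ≥ 0. -/

import Mathlib

open Real

noncomputable def kappa1 (α : ℝ) : ℝ :=
  (Real.sqrt (1 - α ^ 2) + α * (Real.pi - Real.arccos α)) / Real.pi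

/-- `Nten c m x h i j` is the CNTK norm tensor N^{(h)}_{i,j}(x) for an image `x` with `c`
channels (zero-padded over all of ℤ×ℤ) and convolutional filter size q = 2m+1. -/
noncomputable def Nten (c m : ℕ) (x : ℤ → ℤ → Fin c → ℝ) : ℕ → ℤ → ℤ → ℝ
  | 0, i, j => ((2 * (m : ℝ) + 1)) ^ 2 * ∑ l : Fin c, (x i j l) ^ 2
  | h + 1, i, j => (1 / (2 * (m : ℝ) + 1) ^ 2) *
      ∑ a ∈ Finset.Icc (-(m : ℤ)) (m : ℤ), ∑ b ∈ Finset.Icc (-(m : ℤ)) (m : ℤ),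
        Nten c m x h (i + a) (j + b)

/-- `Gam c m y z h i j i' j'` is the ReLU-CNTK covariance tensor Γ^{(h)}_{i,j,i',j'}(y,z). -/
noncomputable def Gam (c m : ℕ) (y z : ℤ → ℤ → Fin c → ℝ) : ℕ → ℤ → ℤ → ℤ → ℤ → ℝ
  | 0, i, j, i', j' => ∑ l : Fin c, y i j l * z i' j' l
  | h + 1, i, j, i', j' =>
      (Real.sqrt (Nten c m y (h + 1) i j * Nten c m z (h + 1) i' j') / (2 * (m : ℝ) + 1) ^ 2) *
        kappa1 ((∑ a ∈ Finset.Icc (-(m : ℤ)) (m : ℤ), ∑ b ∈ Finset.Icc (-(m : ℤ)) (m : ℤ),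
            Gam c m y z h (i + a) (j + b) (i' + a) (j' + b)) /
          Real.sqrt (Nten c m y (h + 1) i j * Nten c m z (h + 1) i' j'))

/-! ### Auxiliary lemmas about `kappa1` -/

lemma g_hasDeriv {x : ℝ} (hx : x ∈ Set.Ioo (-1:ℝ) 1) :
    HasDerivAt (fun α : ℝ => Real.sqrt (1 - α ^ 2) + α * (Real.pi - Real.arccos α))
      (Real.pi - Real.arccos x) x := by
  obtain ⟨h1, h2⟩ := hx
  have hpos : (0:ℝ) < 1 - x ^ 2 := by nlinarith
  have hne : (1:ℝ) - x ^ 2 ≠ 0 := ne_of_gt hpos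
  have hsne : Real.sqrt (1 - x ^ 2) ≠ 0 := by positivity
  have hin : HasDerivAt (fun α : ℝ => 1 - α ^ 2) (-(2 * x)) x := by
    simpa using (hasDerivAt_pow 2 x).const_sub 1
  have hsqrt : HasDerivAt (fun α : ℝ => Real.sqrt (1 - α ^ 2))
      (1 / (2 * Real.sqrt (1 - x ^ 2)) * (-(2 * x))) x :=
    (Real.hasDerivAt_sqrt hne).comp x hin
  have harccos : HasDerivAt Real.arccos (-(1 / Real.sqrt (1 - x ^ 2))) x :=
    Real.hasDerivAt_arccos (ne_of_gt h1) (ne_of_lt h2)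
  have hmul : HasDerivAt (fun α : ℝ => α * (Real.pi - Real.arccos α))
      (1 * (Real.pi - Real.arccos x) + x * (0 - -(1 / Real.sqrt (1 - x ^ 2)))) x :=
    (hasDerivAt_id x).mul ((hasDerivAt_const x Real.pi).sub harccos)
  have := hsqrt.add hmul
  refine this.congr_deriv ?_
  field_simp
  ring

lemma g_mono : MonotoneOn (fun α : ℝ => Real.sqrt (1 - α ^ 2) + α * (Real.pi - Real.arccos α))
    (Set.Icc (-1:ℝ) 1) := by
  apply monotoneOn_of_deriv_nonneg (convex_Icc _ _)
  · exact (((continuous_const.sub (continuous_pow 2)).sqrt).add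
      (continuous_id.mul (continuous_const.sub Real.continuous_arccos))).continuousOn
  · intro x hx
    rw [interior_Icc] at hx
    exact (g_hasDeriv hx).differentiableAt.differentiableWithinAt
  · intro x hx
    rw [interior_Icc] at hx
    rw [(g_hasDeriv hx).deriv]
    have := Real.arccos_le_pi x
    linarith

lemma kappa1_mem {α : ℝ} (h : |α| ≤ 1) : kappa1 α ∈ Set.Icc (0:ℝ) 1 := by
  obtain ⟨h1, h2⟩ := abs_le.1 h
  have hmem : α ∈ Set.Icc (-1:ℝ) 1 := ⟨h1, h2⟩
  have hlo := g_mono (Set.left_mem_Icc.2 (by norm_num)) hmem h1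
  have hhi := g_mono hmem (Set.right_mem_Icc.2 (by norm_num)) h2
  simp only [Real.arccos_neg_one, Real.arccos_one] at hlo hhi
  norm_num at hlo hhi
  unfold kappa1
  constructor
  · exact div_nonneg (by linarith) Real.pi_pos.le
  · rw [div_le_one Real.pi_pos]; linarith

lemma kappa1_abs_le {α : ℝ} (h : |α| ≤ 1) : |kappa1 α| ≤ 1 := by
  obtain ⟨h0, h1⟩ := kappa1_mem h
  rw [abs_of_nonneg h0]; exact h1

lemma kappa1_one : kappa1 1 = 1 := by
  simp [kappa1, Real.arccos_one, Real.pi_ne_zero]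

/-! ### Auxiliary lemmas about `Nten` and sums -/

lemma nten_nonneg (c m : ℕ) (x : ℤ → ℤ → Fin c → ℝ) (h : ℕ) (i j : ℤ) :
    0 ≤ Nten c m x h i j := by
  induction h generalizing i j with
  | zero =>
      exact mul_nonneg (by positivity) (Finset.sum_nonneg fun l _ => sq_nonneg _)
  | succ h ih =>
      exact mul_nonneg (by positivity)
        (Finset.sum_nonneg fun a _ => Finset.sum_nonneg fun b _ => ih _ _)

lemma nten_succ_sum (c m : ℕ) (x : ℤ → ℤ → Fin c → ℝ) (h : ℕ) (i j : ℤ) :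
    ∑ a ∈ Finset.Icc (-(m : ℤ)) (m : ℤ), ∑ b ∈ Finset.Icc (-(m : ℤ)) (m : ℤ),
        Nten c m x h (i + a) (j + b)
      = (2 * (m : ℝ) + 1) ^ 2 * Nten c m x (h + 1) i j := by
  have hq : ((2 * (m : ℝ) + 1) ^ 2) ≠ 0 := by positivity
  show _ = (2 * (m : ℝ) + 1) ^ 2 * ((1 / (2 * (m : ℝ) + 1) ^ 2) * _)
  field_simp

lemma sum_sqrt_mul_le {ι : Type*} {s : Finset ι} {u v : ι → ℝ}
    (hu : ∀ i ∈ s, 0 ≤ u i) (hv : ∀ i ∈ s, 0 ≤ v i) :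
    ∑ i ∈ s, Real.sqrt (u i * v i) ≤ Real.sqrt ((∑ i ∈ s, u i) * ∑ i ∈ s, v i) := by
  have key := Finset.sum_sq_le_sum_mul_sum_of_sq_eq_mul s hu hv
    (fun i hi => Real.sq_sqrt (mul_nonneg (hu i hi) (hv i hi)))
  calc ∑ i ∈ s, Real.sqrt (u i * v i)
      = Real.sqrt ((∑ i ∈ s, Real.sqrt (u i * v i)) ^ 2) :=
        (Real.sqrt_sq (Finset.sum_nonneg fun i _ => Real.sqrt_nonneg _)).symm
    _ ≤ Real.sqrt ((∑ i ∈ s, u i) * ∑ i ∈ s, v i) := Real.sqrt_le_sqrt key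

/-- Cauchy–Schwarz property and diagonal identity of the ReLU-CNTK
covariance tensor Γ^{(h)}. -/
theorem Gam_cauchy_schwarz (c m : ℕ) (y z : ℤ → ℤ → Fin c → ℝ) (h : ℕ) (i j i' j' : ℤ) :
    |Gam c m y z h i j i' j'| ≤
        Real.sqrt (Nten c m y h i j * Nten c m z h i' j') / (2 * (m : ℝ) + 1) ^ 2 ∧
      Gam c m y y h i j i j = Nten c m y h i j / (2 * (m : ℝ) + 1) ^ 2 ∧
      0 ≤ Nten c m y h i j / (2 * (m : ℝ) + 1) ^ 2 := by
  have hq2 : (0:ℝ) < (2 * (m : ℝ) + 1) ^ 2 := by positivity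
  induction h generalizing i j i' j' with
  | zero =>
      refine ⟨?_, ?_, div_nonneg (nten_nonneg c m y 0 i j) hq2.le⟩
      · show |∑ l : Fin c, y i j l * z i' j' l| ≤ _
        have hcs := Finset.sum_mul_sq_le_sq_mul_sq Finset.univ
          (fun l : Fin c => y i j l) (fun l : Fin c => z i' j' l)
        have h1 : |∑ l : Fin c, y i j l * z i' j' l|
            ≤ Real.sqrt ((∑ l : Fin c, (y i j l) ^ 2) * ∑ l : Fin c, (z i' j' l) ^ 2) := by
          rw [← Real.sqrt_sq_eq_abs]
          exact Real.sqrt_le_sqrt hcs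
        have h2 : Nten c m y 0 i j * Nten c m z 0 i' j'
            = ((2 * (m : ℝ) + 1) ^ 2) ^ 2 *
              ((∑ l : Fin c, (y i j l) ^ 2) * ∑ l : Fin c, (z i' j' l) ^ 2) := by
          show ((2 * (m : ℝ) + 1)) ^ 2 * _ * (((2 * (m : ℝ) + 1)) ^ 2 * _) = _
          ring
        rw [h2, Real.sqrt_mul (by positivity), Real.sqrt_sq hq2.le,
          mul_div_cancel_left₀ _ hq2.ne']
        exact h1
      · show (∑ l : Fin c, y i j l * y i j l) = ((2 * (m : ℝ) + 1)) ^ 2 * _ / _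
        rw [mul_div_cancel_left₀ _ hq2.ne']
        exact Finset.sum_congr rfl fun l _ => (sq (y i j l)).symm
  | succ h ih =>
      set s := Finset.Icc (-(m : ℤ)) (m : ℤ) with hs
      refine ⟨?_, ?_, div_nonneg (nten_nonneg c m y (h+1) i j) hq2.le⟩
      · -- Cauchy–Schwarz bound
        set Ny := Nten c m y (h + 1) i j with hNy
        set Nz := Nten c m z (h + 1) i' j' with hNz
        set D := Real.sqrt (Ny * Nz) with hD
        set S := ∑ a ∈ s, ∑ b ∈ s, Gam c m y z h (i + a) (j + b) (i' + a) (j' + b) with hS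
        have hDnn : 0 ≤ D := Real.sqrt_nonneg _
        have hSle : |S| ≤ D := by
          have step1 : |S| ≤ ∑ a ∈ s, ∑ b ∈ s,
              Real.sqrt (Nten c m y h (i + a) (j + b) * Nten c m z h (i' + a) (j' + b))
                / (2 * (m : ℝ) + 1) ^ 2 := by
            refine (Finset.abs_sum_le_sum_abs _ _).trans ?_
            refine Finset.sum_le_sum fun a _ => ?_
            refine (Finset.abs_sum_le_sum_abs _ _).trans ?_
            exact Finset.sum_le_sum fun b _ => (ih (i + a) (j + b) (i' + a) (j' + b)).1
          have step2 : ∑ a ∈ s, ∑ b ∈ s,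
              Real.sqrt (Nten c m y h (i + a) (j + b) * Nten c m z h (i' + a) (j' + b))
              ≤ (2 * (m : ℝ) + 1) ^ 2 * D := by
            have hcs := sum_sqrt_mul_le (s := s ×ˢ s)
              (u := fun p : ℤ × ℤ => Nten c m y h (i + p.1) (j + p.2))
              (v := fun p : ℤ × ℤ => Nten c m z h (i' + p.1) (j' + p.2))
              (fun p _ => nten_nonneg _ _ _ _ _ _) (fun p _ => nten_nonneg _ _ _ _ _ _)
            rw [Finset.sum_product, Finset.sum_product, Finset.sum_product] at hcs
            refine hcs.trans ?_
            rw [nten_succ_sum, nten_succ_sum, ← hNy, ← hNz,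
              show (2 * (m : ℝ) + 1) ^ 2 * Ny * ((2 * (m : ℝ) + 1) ^ 2 * Nz)
                = ((2 * (m : ℝ) + 1) ^ 2) ^ 2 * (Ny * Nz) by ring,
              Real.sqrt_mul (by positivity), Real.sqrt_sq hq2.le, ← hD]
          calc |S| ≤ ∑ a ∈ s, ∑ b ∈ s,
              Real.sqrt (Nten c m y h (i + a) (j + b) * Nten c m z h (i' + a) (j' + b))
                / (2 * (m : ℝ) + 1) ^ 2 := step1
            _ = (∑ a ∈ s, ∑ b ∈ s,
                Real.sqrt (Nten c m y h (i + a) (j + b) * Nten c m z h (i' + a) (j' + b)))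
                  / (2 * (m : ℝ) + 1) ^ 2 := by
                rw [Finset.sum_div]
                exact Finset.sum_congr rfl fun a _ => (Finset.sum_div _ _ _).symm
            _ ≤ ((2 * (m : ℝ) + 1) ^ 2 * D) / (2 * (m : ℝ) + 1) ^ 2 :=
                div_le_div_of_nonneg_right step2 hq2.le
            _ = D := by field_simp
        have habs : |S / D| ≤ 1 := by
          rw [abs_div, abs_of_nonneg hDnn]
          exact div_le_one_of_le₀ hSle hDnn
        show |D / (2 * (m : ℝ) + 1) ^ 2 * kappa1 (S / D)| ≤ D / (2 * (m : ℝ) + 1) ^ 2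
        rw [abs_mul, abs_of_nonneg (div_nonneg hDnn hq2.le)]
        calc D / (2 * (m : ℝ) + 1) ^ 2 * |kappa1 (S / D)|
            ≤ D / (2 * (m : ℝ) + 1) ^ 2 * 1 :=
              mul_le_mul_of_nonneg_left (kappa1_abs_le habs) (div_nonneg hDnn hq2.le)
          _ = D / (2 * (m : ℝ) + 1) ^ 2 := mul_one _
      · -- diagonal identity
        set N := Nten c m y (h + 1) i j with hN
        have hNnn : 0 ≤ N := nten_nonneg c m y (h+1) i j
        have hroot : Real.sqrt (N * N) = N := Real.sqrt_mul_self hNnn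
        have hSd : ∑ a ∈ s, ∑ b ∈ s, Gam c m y y h (i + a) (j + b) (i + a) (j + b) = N := by
          have hdiag : ∀ a ∈ s, ∀ b ∈ s,
              Gam c m y y h (i + a) (j + b) (i + a) (j + b)
                = Nten c m y h (i + a) (j + b) / (2 * (m : ℝ) + 1) ^ 2 :=
            fun a _ b _ => (ih (i + a) (j + b) (i + a) (j + b)).2.1
          calc ∑ a ∈ s, ∑ b ∈ s, Gam c m y y h (i + a) (j + b) (i + a) (j + b)
              = ∑ a ∈ s, ∑ b ∈ s, Nten c m y h (i + a) (j + b) / (2 * (m : ℝ) + 1) ^ 2 :=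
                Finset.sum_congr rfl fun a ha => Finset.sum_congr rfl fun b hb => hdiag a ha b hb
            _ = (∑ a ∈ s, ∑ b ∈ s, Nten c m y h (i + a) (j + b)) / (2 * (m : ℝ) + 1) ^ 2 := by
                rw [Finset.sum_div]
                exact Finset.sum_congr rfl fun a _ => (Finset.sum_div _ _ _).symm
            _ = ((2 * (m : ℝ) + 1) ^ 2 * N) / (2 * (m : ℝ) + 1) ^ 2 := by
                rw [nten_succ_sum]
            _ = N := by field_simp
        show Real.sqrt (N * N) / (2 * (m : ℝ) + 1) ^ 2 * kappa1 (_ / Real.sqrt (N * N))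
            = N / (2 * (m : ℝ) + 1) ^ 2
        rw [hroot, hSd]
        rcases eq_or_lt_of_le hNnn with hN0 | hNpos
        · rw [← hN0]
          simp
        · rw [div_self hNpos.ne', kappa1_one, mul_one]
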